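/- arXiv:1712.10017 — 2 statements merged into one kernel-verified Lean document; each statement's English description precedes it below -/
import Mathlib

section
/- Let q = 2^m, i ∈ F_{q^2} with i^2 = i + k, Tr(k) = 1, α = A + iB, β = C + iD with A,B,C,D ∈ F_q, α ≠ 0. Then β = α^{q-1} ∈ F_{q^2} \ F_q, Tr(1 + 1/α^{q+1}) = 0, and α + α^q = β + β^q hold if and only if C = A + B + 1, D = B ≠ 0, A^2 + AB + B^2k + B = 0, and m is odd. -/
/-!
Write `q = 2^m`. Since `Tr(k) = 1`, the polynomial `X^2 + X + k` has no root in `F_q`, so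
`1, i` are `F_q`-linearly independent, and the Frobenius acts by `i^q = i + Tr(k) = i + 1`.
Hence `α^q = (A + B) + iB`, `α + α^q = B` and `α^{q+1} = A^2 + AB + kB^2`; so the last
condition reads `D = B`, and `β ∉ F_q` reads `D ≠ 0`. In coordinates, `β = α^{q-1}`, i.e.
`βα = α^q`, becomes two equations over `F_q`; given `D = B ≠ 0` they say `C = A + B + 1` and
`A^2 + AB + kB^2 = B`. Dividing the latter by `B^2` gives
`1/B = (A/B)^2 + A/B + k`, so `Tr(1/B) = Tr(k) = 1` and `Tr(1 + 1/α^{q+1}) = Tr(1) + 1 = m + 1`,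
which vanishes exactly when `m` is odd.
-/

/-- The absolute trace `Tr(z) = z + z^2 + z^4 + ⋯ + z^{2^{m-1}}`, computed inside the field. -/
def traceSum {F : Type*} [Field F] (m : ℕ) (z : F) : F :=
  ∑ j ∈ Finset.range m, z ^ 2 ^ j

section Trace

variable {F : Type*} [Field F]

lemma traceSum_map {E : Type*} [Field E] (f : F →+* E) (m : ℕ) (z : F) :
    traceSum m (f z) = f (traceSum m z) := by
  simp [traceSum, map_sum, map_pow]

lemma traceSum_one (m : ℕ) : traceSum m (1 : F) = m := by
  simp [traceSum]

variable [CharP F 2]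

lemma traceSum_add (m : ℕ) (a b : F) : traceSum m (a + b) = traceSum m a + traceSum m b := by
  simp [traceSum, add_pow_char_pow, Finset.sum_add_distrib]

lemma traceSum_succ (n : ℕ) (z : F) : traceSum (n + 1) z = z + traceSum n z ^ 2 := by
  rw [traceSum, traceSum, sum_pow_char, Finset.sum_range_succ', pow_zero, pow_one, add_comm]
  congr 1
  exact Finset.sum_congr rfl fun j _ => by rw [← pow_mul, ← pow_succ]

lemma traceSum_sq_add_self {m : ℕ} {x : F} (hx : x ^ 2 ^ m = x) :
    traceSum m (x ^ 2 + x) = 0 := by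
  have hterm (j : ℕ) : (x ^ 2 + x) ^ 2 ^ j = x ^ 2 ^ (j + 1) - x ^ 2 ^ j := by
    rw [add_pow_char_pow, ← pow_mul, CharTwo.sub_eq_add, pow_succ, mul_comm (2 ^ j)]
  rw [traceSum, Finset.sum_congr rfl fun j _ => hterm j,
    Finset.sum_range_sub (fun j => x ^ 2 ^ j), hx, pow_zero, pow_one, sub_self]

lemma sq_add_self_ne_of_traceSum_eq_one {m : ℕ} (hfrob : ∀ x : F, x ^ 2 ^ m = x) {k : F}
    (hk : traceSum m k = 1) (y : F) : y ^ 2 + y ≠ k := by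
  rintro rfl
  exact zero_ne_one ((traceSum_sq_add_self (hfrob y)).symm.trans hk)

lemma pow_two_pow_eq_add_traceSum {i c : F} (hi : i ^ 2 = i + c) (n : ℕ) :
    i ^ 2 ^ n = i + traceSum n c := by
  induction n with
  | zero => simp [traceSum]
  | succ n ih =>
    rw [pow_succ, pow_mul, ih, add_pow_char, traceSum_succ, hi]
    ring

lemma natCast_add_one_eq_zero_iff_odd (m : ℕ) : (m : F) + 1 = 0 ↔ Odd m := by
  rw [CharTwo.natCast_eq_ite, ← Nat.not_even_iff_odd]
  split_ifs <;> simp_all [CharTwo.add_self_eq_zero]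

end Trace

section QuadraticExtension

variable {F E : Type*} [Field F] [Field E] [Algebra F E] {i : E}

lemma algebraMap_add_mul_algebraMap_inj (hiF : i ∉ Set.range (algebraMap F E)) {a b c d : F} :
    algebraMap F E a + i * algebraMap F E b = algebraMap F E c + i * algebraMap F E d ↔
      a = c ∧ b = d := by
  refine ⟨fun h => ?_, by rintro ⟨rfl, rfl⟩; rfl⟩
  have hinj := (algebraMap F E).injective
  by_cases hbd : b = d
  · subst hbd
    exact ⟨hinj (add_right_cancel h), rfl⟩
  · refine absurd ⟨(a - c) / (d - b), ?_⟩ hiF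
    rw [map_div₀, div_eq_iff ((map_ne_zero _).2 (sub_ne_zero.2 (Ne.symm hbd))), map_sub, map_sub]
    linear_combination h

lemma algebraMap_add_mul_algebraMap_mem_range_iff (hiF : i ∉ Set.range (algebraMap F E))
    {c d : F} :
    algebraMap F E c + i * algebraMap F E d ∈ Set.range (algebraMap F E) ↔ d = 0 := by
  constructor
  · rintro ⟨y, hy⟩
    exact ((algebraMap_add_mul_algebraMap_inj hiF (b := 0)).1 (by simpa using hy)).2.symm
  · rintro rfl
    exact ⟨c, by simp⟩

lemma notMem_range_algebraMap_of_sq_eq [CharP F 2] [CharP E 2] {m : ℕ}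
    (hfrob : ∀ x : F, x ^ 2 ^ m = x) {k : F} (hk : traceSum m k = 1)
    (hi : i ^ 2 = i + algebraMap F E k) :
    i ∉ Set.range (algebraMap F E) := by
  rintro ⟨y, rfl⟩
  refine sq_add_self_ne_of_traceSum_eq_one hfrob hk y ((algebraMap F E).injective ?_)
  rw [map_add, map_pow, hi, add_comm, ← add_assoc, CharTwo.add_self_eq_zero, zero_add]

lemma mul_algebraMap_add_mul_algebraMap {k : F} (hi : i ^ 2 = i + algebraMap F E k)
    (a b c d : F) :
    (algebraMap F E c + i * algebraMap F E d) * (algebraMap F E a + i * algebraMap F E b) =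
      algebraMap F E (c * a + k * d * b) + i * algebraMap F E (c * b + d * a + d * b) := by
  simp only [map_add, map_mul]
  linear_combination algebraMap F E d * algebraMap F E b * hi

variable [CharP E 2] {m : ℕ} (hfrob : ∀ x : F, x ^ 2 ^ m = x)
  (hiq : i ^ 2 ^ m = i + 1)
include hfrob hiq

lemma algebraMap_add_mul_algebraMap_pow (a b : F) :
    (algebraMap F E a + i * algebraMap F E b) ^ 2 ^ m =
      algebraMap F E (a + b) + i * algebraMap F E b := by
  rw [add_pow_char_pow, mul_pow, hiq, ← map_pow, ← map_pow, hfrob, hfrob, map_add]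
  ring

lemma algebraMap_add_mul_algebraMap_add_pow (a b : F) :
    algebraMap F E a + i * algebraMap F E b + (algebraMap F E a + i * algebraMap F E b) ^ 2 ^ m =
      algebraMap F E b := by
  rw [algebraMap_add_mul_algebraMap_pow hfrob hiq, map_add]
  linear_combination (algebraMap F E a + i * algebraMap F E b) * CharTwo.two_eq_zero (R := E)

lemma algebraMap_add_mul_algebraMap_pow_add_one {k : F} (hi : i ^ 2 = i + algebraMap F E k)
    (a b : F) :
    (algebraMap F E a + i * algebraMap F E b) ^ (2 ^ m + 1) =
      algebraMap F E (a ^ 2 + a * b + k * b ^ 2) := by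
  rw [pow_succ, algebraMap_add_mul_algebraMap_pow hfrob hiq]
  simp only [map_add, map_mul, map_pow]
  linear_combination algebraMap F E b ^ 2 * hi +
    (i * algebraMap F E a * algebraMap F E b + i * algebraMap F E b ^ 2) *
      CharTwo.two_eq_zero (R := E)

end QuadraticExtension

lemma eq_pow_sub_one_iff_mul_eq_pow {M : Type*} [GroupWithZero M] {a b : M} (ha : a ≠ 0) {n : ℕ}
    (hn : 1 ≤ n) : b = a ^ (n - 1) ↔ b * a = a ^ n := by
  rw [← mul_left_inj' ha, ← pow_succ, Nat.sub_add_cancel hn]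

section Coordinates

variable {F : Type*} [Field F] [CharP F 2]

lemma coordinate_equations_iff {k A B C : F} (hB : B ≠ 0) :
    (C * A + k * B * B = A + B ∧ C * B + B * A + B * B = B) ↔
      (C = A + B + 1 ∧ A ^ 2 + A * B + B ^ 2 * k + B = 0) := by
  have h2 := CharTwo.two_eq_zero (R := F)
  have hC : C * B + B * A + B * B = B ↔ C = A + B + 1 := by
    constructor
    · intro h
      exact mul_left_cancel₀ hB (by linear_combination h - (B * A + B ^ 2) * h2)
    · rintro rfl
      linear_combination (A * B + B ^ 2) * h2
  rw [hC]
  constructor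
  · rintro ⟨h, rfl⟩
    exact ⟨rfl, by linear_combination h + B * h2⟩
  · rintro ⟨rfl, h⟩
    exact ⟨by linear_combination h - B * h2, rfl⟩

lemma traceSum_inv_eq_one_of_quadric {m : ℕ} (hfrob : ∀ x : F, x ^ 2 ^ m = x) {k A B : F}
    (hk : traceSum m k = 1) (hB : B ≠ 0) (hQ : A ^ 2 + A * B + B ^ 2 * k + B = 0) :
    traceSum m B⁻¹ = 1 := by
  have hinv : B⁻¹ = (A / B) ^ 2 + A / B + k := by
    field_simp
    linear_combination -hQ + B * CharTwo.two_eq_zero (R := F)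
  rw [hinv, traceSum_add, traceSum_sq_add_self (hfrob _), hk, zero_add]

lemma coordinate_conditions_iff {m : ℕ} (hfrob : ∀ x : F, x ^ 2 ^ m = x) {k : F}
    (hk : traceSum m k = 1) (A B C D : F) :
    ((C * A + k * D * B = A + B ∧ C * B + D * A + D * B = B) ∧ D ≠ 0 ∧
        traceSum m (1 + (A ^ 2 + A * B + k * B ^ 2)⁻¹) = 0 ∧ B = D) ↔
      (C = A + B + 1 ∧ D = B ∧ B ≠ 0 ∧ A ^ 2 + A * B + B ^ 2 * k + B = 0 ∧ Odd m) := by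
  have htrace (hB : B ≠ 0) (hQ : A ^ 2 + A * B + B ^ 2 * k + B = 0) :
      traceSum m (1 + (A ^ 2 + A * B + k * B ^ 2)⁻¹) = m + 1 := by
    have hN : A ^ 2 + A * B + k * B ^ 2 = B := by
      linear_combination hQ - B * CharTwo.two_eq_zero (R := F)
    rw [hN, traceSum_add, traceSum_one, traceSum_inv_eq_one_of_quadric hfrob hk hB hQ]
  constructor
  · rintro ⟨hmul, hB, htr, rfl⟩
    obtain ⟨hC, hQ⟩ := (coordinate_equations_iff hB).1 hmul
    rw [htrace hB hQ, natCast_add_one_eq_zero_iff_odd] at htr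
    exact ⟨hC, rfl, hB, hQ, htr⟩
  · rintro ⟨hC, rfl, hB, hQ, hm⟩
    refine ⟨(coordinate_equations_iff hB).2 ⟨hC, hQ⟩, hB, ?_, rfl⟩
    rwa [htrace hB hQ, natCast_add_one_eq_zero_iff_odd]

end Coordinates

theorem stmt_12_general {F E : Type*} [Field F] [Fintype F] [Field E] [Algebra F E]
    (m : ℕ) (hF : Fintype.card F = 2 ^ m)
    (k : F) (hk : traceSum m k = 1) (i : E) (hi : i ^ 2 = i + algebraMap F E k)
    (A B C D : F) (α β : E)
    (hα : α = algebraMap F E A + i * algebraMap F E B)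
    (hβ : β = algebraMap F E C + i * algebraMap F E D)
    (hα0 : α ≠ 0) :
    (β = α ^ (2 ^ m - 1) ∧ β ∉ Set.range (algebraMap F E) ∧
        traceSum m (1 + 1 / α ^ (2 ^ m + 1)) = 0 ∧
        α + α ^ 2 ^ m = β + β ^ 2 ^ m) ↔
      (C = A + B + 1 ∧ D = B ∧ B ≠ 0 ∧ A ^ 2 + A * B + B ^ 2 * k + B = 0 ∧ Odd m) := by
  have : Fact (Nat.Prime 2) := ⟨Nat.prime_two⟩
  have : CharP F 2 := charP_of_card_eq_prime_pow hF
  have : CharP E 2 := (Algebra.charP_iff F E 2).1 this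
  have hfrob (x : F) : x ^ 2 ^ m = x := hF ▸ FiniteField.pow_card x
  have hiF := notMem_range_algebraMap_of_sq_eq hfrob hk hi
  have hiq : i ^ 2 ^ m = i + 1 := by
    rw [pow_two_pow_eq_add_traceSum hi, traceSum_map, hk, map_one]
  rw [eq_pow_sub_one_iff_mul_eq_pow hα0 Nat.one_le_two_pow, hα, hβ,
    algebraMap_add_mul_algebraMap_pow_add_one hfrob hiq hi,
    algebraMap_add_mul_algebraMap_add_pow hfrob hiq,
    algebraMap_add_mul_algebraMap_add_pow hfrob hiq,
    algebraMap_add_mul_algebraMap_pow hfrob hiq, mul_algebraMap_add_mul_algebraMap hi,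
    algebraMap_add_mul_algebraMap_inj hiF, algebraMap_add_mul_algebraMap_mem_range_iff hiF,
    one_div, ← map_inv₀, ← map_one (algebraMap F E), ← map_add, traceSum_map, map_eq_zero,
    (algebraMap F E).injective.eq_iff]
  exact coordinate_conditions_iff hfrob hk A B C D

/-- `β = α^{q-1} ∈ F_{q^2} \ F_q`, `Tr(1 + 1/α^{q+1}) = 0` and `α + α^q = β + β^q` hold iff
`C = A + B + 1`, `D = B ≠ 0`, `A^2 + AB + B^2 k + B = 0` and `m` is odd. -/
theorem stmt_12 {F E : Type*} [Field F] [Fintype F] [Field E] [Fintype E] [Algebra F E]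
    (m : ℕ) (hm : 0 < m) (hF : Fintype.card F = 2 ^ m) (hE : Fintype.card E = (2 ^ m) ^ 2)
    (k : F) (hk : traceSum m k = 1) (i : E) (hi : i ^ 2 = i + algebraMap F E k)
    (A B C D : F) (α β : E)
    (hα : α = algebraMap F E A + i * algebraMap F E B)
    (hβ : β = algebraMap F E C + i * algebraMap F E D)
    (hα0 : α ≠ 0) :
    (β = α ^ (2 ^ m - 1) ∧ β ∉ Set.range (algebraMap F E) ∧
        traceSum m (1 + 1 / α ^ (2 ^ m + 1)) = 0 ∧
        α + α ^ 2 ^ m = β + β ^ 2 ^ m) ↔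
      (C = A + B + 1 ∧ D = B ∧ B ≠ 0 ∧ A ^ 2 + A * B + B ^ 2 * k + B = 0 ∧ Odd m) :=
  stmt_12_general m hF k hk i hi A B C D α β hα hβ hα0
end

section
/- Let q = 2^m and suppose f(x) = x + α x^{q(q-1)+1} + β x^{2(q-1)+1} with α, β ∈ F_{q^2}^*, β(1 + α^{q+1} + β^{q+1}) + α^{2q} = 0, β^{q+1} ≠ 1, and Tr(β^{q+1}/α^{q+1}) = 0. Then f permutes F_{q^2}. -/
theorem injective_mul_comp_pow_sub_one {K : Type*} [Field K] [Fintype K] {q : ℕ}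
    (hK : Fintype.card K = q ^ 2) {h : K → K} (hne : ∀ y, y ^ (q + 1) = 1 → h y ≠ 0)
    (hinj : ∀ y₁ y₂, y₁ ^ (q + 1) = 1 → y₂ ^ (q + 1) = 1 →
      y₁ * h y₁ ^ (q - 1) = y₂ * h y₂ ^ (q - 1) → y₁ = y₂) :
    Function.Injective fun x => x * h (x ^ (q - 1)) := by
  have hcircle : ∀ x : K, x ≠ 0 → (x ^ (q - 1)) ^ (q + 1) = 1 := fun x hx => by
    rw [← pow_mul, mul_comm, ← Nat.sq_sub_sq, one_pow, ← hK,
      FiniteField.pow_card_sub_one_eq_one x hx]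
  have hzero : ∀ x : K, x * h (x ^ (q - 1)) = 0 → x = 0 := fun x hx => by
    by_contra hx0
    exact mul_ne_zero hx0 (hne _ (hcircle x hx0)) hx
  intro x₁ x₂ (hx : x₁ * h (x₁ ^ (q - 1)) = x₂ * h (x₂ ^ (q - 1)))
  by_cases h₁ : x₁ = 0
  · rw [h₁, zero_mul, eq_comm] at hx
    rw [h₁, hzero x₂ hx]
  by_cases h₂ : x₂ = 0
  · rw [h₂, zero_mul] at hx
    exact absurd (hzero x₁ hx) h₁
  have hy : x₁ ^ (q - 1) = x₂ ^ (q - 1) :=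
    hinj _ _ (hcircle x₁ h₁) (hcircle x₂ h₂) <| by
      simpa only [mul_pow] using congrArg (· ^ (q - 1)) hx
  rw [hy] at hx
  exact mul_right_cancel₀ (hne _ (hcircle x₂ h₂)) hx

theorem traceSum_sq_add_self_s18 {E : Type*} [Field E] [CharP E 2] (m : ℕ) (z : E) :
    traceSum m (z ^ 2 + z) = z ^ 2 ^ m + z := by
  have hterm (j : ℕ) : (z ^ 2 + z) ^ 2 ^ j = z ^ 2 ^ (j + 1) - z ^ 2 ^ j := by
    rw [add_pow_char_pow, ← pow_mul, ← pow_succ', CharTwo.sub_eq_add]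
  rw [traceSum, Finset.sum_congr rfl fun j _ => hterm j,
    Finset.sum_range_sub (fun j => z ^ 2 ^ j), pow_zero, pow_one, CharTwo.sub_eq_add]

theorem traceSum_sq_add_self_eq_one {E : Type*} [Field E] [CharP E 2] {m : ℕ} {z : E}
    (hz : z ^ 2 ^ m = z + 1) : traceSum m (z ^ 2 + z) = 1 := by
  rw [traceSum_sq_add_self_s18, hz, add_right_comm, CharTwo.add_self_eq_zero, zero_add]

namespace TrinomialPerm

section Field

variable {E : Type*} [Field E] (σ : E →+* E) {α β u : E}

theorem map_eq_of_norm_add_norm (hσ : ∀ a, σ (σ a) = a) (hu : σ α * α + σ β * β = u) :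
    σ u = u := by
  rw [← hu]
  simp only [map_add, map_mul, hσ]
  ring

theorem map_mul_one_add_eq_sq (hσ : ∀ a, σ (σ a) = a) (hu : σ α * α + σ β * β = u)
    (hβ : β * (1 + u) = σ α ^ 2) : σ β * (1 + u) = α ^ 2 := by
  simpa only [map_mul, map_add, map_one, map_pow, hσ, map_eq_of_norm_add_norm σ hσ hu]
    using congrArg σ hβ

theorem one_add_ne_zero_of_mul_eq_sq (hα : α ≠ 0) (hβ : β * (1 + u) = σ α ^ 2) : 1 + u ≠ 0 := by
  intro h
  rw [h, mul_zero, eq_comm, sq_eq_zero_iff, map_eq_zero] at hβ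
  exact hα hβ

theorem norm_div_norm_eq (hβ : β ≠ 0) (hB : σ β * β = u ^ 2) (hA : σ α * α = u * (1 + u)) :
    σ β * β / (σ α * α) = u / (1 + u) := by
  have hu : u ≠ 0 := by
    rintro rfl
    simp [hβ] at hB
  rw [hB, hA, sq, mul_div_mul_left _ _ hu]

theorem map_add_eq_div_of_mul_eq_one {y₁ y₂ : E} (hy₁ : σ y₁ * y₁ = 1) (hy₂ : σ y₂ * y₂ = 1) :
    σ (y₁ + y₂) = (y₁ + y₂) / (y₁ * y₂) := by
  have hy₁0 := right_ne_zero_of_mul_eq_one hy₁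
  have hy₂0 := right_ne_zero_of_mul_eq_one hy₂
  rw [map_add, eq_inv_of_mul_eq_one_left hy₁, eq_inv_of_mul_eq_one_left hy₂]
  field_simp
  ring

/-- The `h` of `f(x) = x h(x^{q-1})`, with `σ` in place of `(·)^q`. -/
def cofactor (σ : E →+* E) (α β y : E) : E := 1 + α * σ y + β * y ^ 2

theorem mul_cofactor {y : E} (hy : σ y * y = 1) : y * cofactor σ α β y = β * y ^ 3 + y + α := by
  unfold cofactor
  linear_combination α * hy

theorem sq_mul_map_cofactor (hσ : ∀ a, σ (σ a) = a) {y : E} (hy : σ y * y = 1) :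
    y ^ 2 * σ (cofactor σ α β y) = σ α * y ^ 3 + y ^ 2 + σ β := by
  simp only [cofactor, map_add, map_mul, map_one, map_pow, hσ]
  linear_combination σ β * (σ y * y + 1) * hy

end Field

section CharTwo

variable {E : Type*} [Field E] [CharP E 2] (σ : E →+* E) {α β u : E}

theorem norms_eq (hσ : ∀ a, σ (σ a) = a) (hu : σ α * α + σ β * β = u)
    (hβ : β * (1 + u) = σ α ^ 2) (hβ1 : σ β * β ≠ 1) :
    σ β * β = u ^ 2 ∧ σ α * α = u * (1 + u) := by
  have hβ' := map_mul_one_add_eq_sq σ hσ hu hβ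
  have hsq : (σ α * α) ^ 2 = σ β * β * (1 + u) ^ 2 := by
    linear_combination (-(σ β * (1 + u))) * hβ - σ α ^ 2 * hβ'
  have hfac : (u ^ 2 + σ β * β) * (1 + σ β * β) = 0 := by
    linear_combination (norm := (ring_nf; reduce_mod_char!)) hsq + (σ α * α + σ β * β + u) * hu
  have hB : σ β * β = u ^ 2 := by
    have h1 : 1 + σ β * β ≠ 0 := fun h => hβ1 <| by
      linear_combination (norm := (ring_nf; reduce_mod_char!)) h
    linear_combination (norm := (ring_nf; reduce_mod_char!)) (mul_eq_zero.mp hfac).resolve_right h1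
  refine ⟨hB, ?_⟩
  linear_combination (norm := (ring_nf; reduce_mod_char!)) hu + hB

theorem exists_sq_add_self_eq_of_cubic_root (hσ : ∀ a, σ (σ a) = a) (hα : α ≠ 0)
    (hu : σ α * α + σ β * β = u) (hβ : β * (1 + u) = σ α ^ 2) (hA : σ α * α = u * (1 + u))
    {y : E} (hy : σ y * y = 1) (hroot : β * y ^ 3 + y + α = 0) :
    ∃ z, z ^ 2 + z = u / (1 + u) ∧ σ z = z + 1 := by
  have hβ' := map_mul_one_add_eq_sq σ hσ hu hβ
  have hD := one_add_ne_zero_of_mul_eq_sq σ hα hβ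
  have hα' : σ α ≠ 0 := (map_ne_zero σ).mpr hα
  have hroot' : σ α * y ^ 3 + y ^ 2 + σ β = 0 := by
    have h := congrArg σ hroot
    simp only [map_add, map_mul, map_pow, map_zero] at h
    linear_combination y ^ 3 * h - (σ β * ((σ y * y) ^ 2 + σ y * y + 1) + y ^ 2) * hy
  have hquad : β * y ^ 2 + σ α * y + u = 0 := by
    linear_combination (norm := (ring_nf; reduce_mod_char!)) σ α * hroot + β * hroot' + hu
  have hconj : σ β * σ α = α * u := mul_right_cancel₀ hD <| by
    linear_combination σ α * hβ' + α * hA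
  refine ⟨β * y / σ α, ?_, ?_⟩
  · field_simp
    linear_combination (norm := (ring_nf; reduce_mod_char!)) β * (1 + u) * hquad + u * hβ
  · rw [map_div₀, map_mul, hσ]
    field_simp
    linear_combination (norm := (ring_nf; reduce_mod_char!))
      σ y * hconj + α * σ y * hquad + α * (β * y + σ α) * hy

theorem exists_sq_add_self_eq_mul_div_sq {y₁ y₂ : E} (hy₁ : σ y₁ * y₁ = 1)
    (hy₂ : σ y₂ * y₂ = 1) (hs : y₁ + y₂ ≠ 0) :
    ∃ w, w ^ 2 + w = y₁ * y₂ / (y₁ + y₂) ^ 2 ∧ σ w = w + 1 := by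
  have hy₁0 := right_ne_zero_of_mul_eq_one hy₁
  have hy₂0 := right_ne_zero_of_mul_eq_one hy₂
  refine ⟨y₁ / (y₁ + y₂), ?_, ?_⟩
  · field_simp
    linear_combination (norm := (ring_nf; reduce_mod_char!))
  · rw [map_div₀, map_add_eq_div_of_mul_eq_one σ hy₁ hy₂, eq_inv_of_mul_eq_one_left hy₁]
    field_simp
    linear_combination (norm := (ring_nf; reduce_mod_char!))

theorem exists_sq_add_self_eq_of_cross_eq (hσ : ∀ a, σ (σ a) = a) (hα : α ≠ 0)
    (hu : σ α * α + σ β * β = u) (hβ : β * (1 + u) = σ α ^ 2)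
    {y₁ y₂ : E} (hy₁ : σ y₁ * y₁ = 1) (hy₂ : σ y₂ * y₂ = 1) (hne : y₁ ≠ y₂)
    (heq : (σ α * y₁ ^ 3 + y₁ ^ 2 + σ β) * (β * y₂ ^ 3 + y₂ + α)
      = (σ α * y₂ ^ 3 + y₂ ^ 2 + σ β) * (β * y₁ ^ 3 + y₁ + α)) :
    ∃ z, z ^ 2 + z = u / (1 + u) ∧ σ z = z + 1 := by
  have hσu := map_eq_of_norm_add_norm σ hσ hu
  have hβ' := map_mul_one_add_eq_sq σ hσ hu hβ
  have hD := one_add_ne_zero_of_mul_eq_sq σ hα hβ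
  have hs : y₁ + y₂ ≠ 0 := fun h => hne (CharTwo.add_eq_zero.mp h)
  have hP : σ α * (y₁ * y₂) * (y₁ + y₂) + u * ((y₁ + y₂) ^ 2 + y₁ * y₂) + β * (y₁ * y₂) ^ 2
      + y₁ * y₂ + α * (y₁ + y₂) + σ β = 0 := by
    refine (mul_eq_zero.mp ?_).resolve_left hs
    linear_combination (norm := (ring_nf; reduce_mod_char!)) heq + (y₁ ^ 3 + y₂ ^ 3) * hu
  have hy₁0 := right_ne_zero_of_mul_eq_one hy₁
  have hy₂0 := right_ne_zero_of_mul_eq_one hy₂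
  have hσs := map_add_eq_div_of_mul_eq_one σ hy₁ hy₂
  have hσt : σ (y₁ * y₂) = (y₁ * y₂)⁻¹ := eq_inv_of_mul_eq_one_left <| by
    rw [map_mul]
    linear_combination σ y₁ * y₁ * hy₂ + hy₁
  have hζ : ((σ α * (y₁ * y₂) + α) / ((1 + u) * (y₁ + y₂))) ^ 2
      + (σ α * (y₁ * y₂) + α) / ((1 + u) * (y₁ + y₂))
      = u / (1 + u) + y₁ * y₂ / (y₁ + y₂) ^ 2 := by
    field_simp
    linear_combination (norm := (ring_nf; reduce_mod_char!))
      (1 + u) * hP + (y₁ * y₂) ^ 2 * hβ + hβ'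
  have hσζ : σ ((σ α * (y₁ * y₂) + α) / ((1 + u) * (y₁ + y₂)))
      = (σ α * (y₁ * y₂) + α) / ((1 + u) * (y₁ + y₂)) := by
    simp only [map_div₀, map_add, map_mul, map_one, hσ, hσu, hσs, hσt]
    field_simp
    ring
  obtain ⟨w, hw, hσw⟩ := exists_sq_add_self_eq_mul_div_sq σ hy₁ hy₂ hs
  refine ⟨(σ α * (y₁ * y₂) + α) / ((1 + u) * (y₁ + y₂)) + w, ?_, ?_⟩
  · linear_combination (norm := (ring_nf; reduce_mod_char!)) hζ + hw
  · rw [map_add, hσζ, hσw, add_assoc]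

theorem cofactor_ne_zero (hσ : ∀ a, σ (σ a) = a) (hα : α ≠ 0)
    (hu : σ α * α + σ β * β = u) (hβ : β * (1 + u) = σ α ^ 2) (hA : σ α * α = u * (1 + u))
    (hTr : ¬∃ z, z ^ 2 + z = u / (1 + u) ∧ σ z = z + 1) {y : E} (hy : σ y * y = 1) :
    cofactor σ α β y ≠ 0 := fun h0 =>
  hTr <| exists_sq_add_self_eq_of_cubic_root σ hσ hα hu hβ hA hy <| by
    rw [← mul_cofactor σ hy, h0, mul_zero]

theorem eq_of_mul_map_cofactor_eq (hσ : ∀ a, σ (σ a) = a) (hα : α ≠ 0)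
    (hu : σ α * α + σ β * β = u) (hβ : β * (1 + u) = σ α ^ 2)
    (hTr : ¬∃ z, z ^ 2 + z = u / (1 + u) ∧ σ z = z + 1)
    {y₁ y₂ : E} (hy₁ : σ y₁ * y₁ = 1) (hy₂ : σ y₂ * y₂ = 1)
    (h : y₁ * σ (cofactor σ α β y₁) * cofactor σ α β y₂
      = y₂ * σ (cofactor σ α β y₂) * cofactor σ α β y₁) : y₁ = y₂ := by
  by_contra hne
  refine hTr (exists_sq_add_self_eq_of_cross_eq σ hσ hα hu hβ hy₁ hy₂ hne ?_)
  rw [← sq_mul_map_cofactor σ hσ hy₁, ← sq_mul_map_cofactor σ hσ hy₂, ← mul_cofactor σ hy₁,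
    ← mul_cofactor σ hy₂]
  linear_combination y₁ * y₂ * h

end CharTwo

end TrinomialPerm

open TrinomialPerm

theorem stmt_18_general {E : Type*} [Field E] [Fintype E] (m : ℕ)
    (hE : Fintype.card E = (2 ^ m) ^ 2) (α β : E) (hαβ : α * β ≠ 0)
    (h1 : β * (1 + α ^ (2 ^ m + 1) + β ^ (2 ^ m + 1)) + α ^ (2 * 2 ^ m) = 0)
    (h2 : β ^ (2 ^ m + 1) ≠ 1)
    (h3 : traceSum m (β ^ (2 ^ m + 1) / α ^ (2 ^ m + 1)) = 0) :
    Function.Bijective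
      (fun x : E => x + α * x ^ (2 ^ m * (2 ^ m - 1) + 1) + β * x ^ (2 * (2 ^ m - 1) + 1)) := by
  have : CharP E 2 := charP_of_card_eq_prime_pow (hE.trans (pow_mul 2 m 2).symm)
  obtain ⟨σ, hσq⟩ : ∃ σ : E →+* E, ∀ a, σ a = a ^ 2 ^ m := ⟨iterateFrobenius E 2 m, fun _ => rfl⟩
  have hσ (a : E) : σ (σ a) = a := by rw [hσq, hσq, ← pow_mul, ← sq, ← hE, FiniteField.pow_card]
  have hnorm (a : E) : a ^ (2 ^ m + 1) = σ a * a := by rw [pow_succ, hσq]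
  obtain ⟨hα, hβ0⟩ := mul_ne_zero_iff.mp hαβ
  obtain ⟨u, hu⟩ : ∃ u, σ α * α + σ β * β = u := ⟨_, rfl⟩
  have hβ : β * (1 + u) = σ α ^ 2 := by
    rw [hnorm, hnorm, mul_comm 2, pow_mul, ← hσq, CharTwo.add_eq_zero] at h1
    linear_combination h1 - β * hu
  obtain ⟨hB, hA⟩ := norms_eq σ hσ hu hβ (by rwa [← hnorm])
  have hTr : ¬∃ z, z ^ 2 + z = u / (1 + u) ∧ σ z = z + 1 := by
    rintro ⟨z, hz, hσz⟩
    rw [hnorm, hnorm, norm_div_norm_eq σ hβ0 hB hA, ← hz,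
      traceSum_sq_add_self_eq_one (by rw [← hσq, hσz])] at h3
    exact one_ne_zero h3
  have hcircle {y : E} (hy : y ^ (2 ^ m + 1) = 1) : σ y * y = 1 := by rwa [← hnorm]
  rw [← Finite.injective_iff_bijective]
  convert injective_mul_comp_pow_sub_one hE (h := cofactor σ α β)
    (fun y hy => cofactor_ne_zero σ hσ hα hu hβ hA hTr (hcircle hy))
    (fun y₁ y₂ hy₁ hy₂ h => eq_of_mul_map_cofactor_eq σ hσ hα hu hβ hTr (hcircle hy₁)
      (hcircle hy₂) ?_) using 1
  · funext x
    rw [cofactor, hσq]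
    ring
  · have hq : 2 ^ m ≠ 0 := pow_ne_zero m two_ne_zero
    rw [hσq, hσq, ← pow_sub_one_mul hq (cofactor σ α β y₁),
      ← pow_sub_one_mul hq (cofactor σ α β y₂)]
    linear_combination cofactor σ α β y₁ * cofactor σ α β y₂ * h

/-- Sufficiency, case 2 (Tu–Zeng–Li–Helleseth): if
`β(1 + α^{q+1} + β^{q+1}) + α^{2q} = 0`, `β^{q+1} ≠ 1` and `Tr(β^{q+1}/α^{q+1}) = 0`
then `f(x) = x + α x^{q(q-1)+1} + β x^{2(q-1)+1}` permutes `F_{q^2}`. -/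
theorem stmt_18 {E : Type*} [Field E] [Fintype E] (m : ℕ) (hm : 0 < m)
    (hE : Fintype.card E = (2 ^ m) ^ 2) (α β : E) (hαβ : α * β ≠ 0)
    (h1 : β * (1 + α ^ (2 ^ m + 1) + β ^ (2 ^ m + 1)) + α ^ (2 * 2 ^ m) = 0)
    (h2 : β ^ (2 ^ m + 1) ≠ 1)
    (h3 : traceSum m (β ^ (2 ^ m + 1) / α ^ (2 ^ m + 1)) = 0) :
    Function.Bijective
      (fun x : E => x + α * x ^ (2 ^ m * (2 ^ m - 1) + 1) + β * x ^ (2 * (2 ^ m - 1) + 1)) :=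
  stmt_18_general m hE α β hαβ h1 h2 h3
end
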